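/- Let S be a string, a a character, and w a nonempty string with occ_S(w) ≥ 2. If (α, β) ∈ Φ_S(w) but (α, β) ∉ Φ_{aS}(w), then either αw is a prefix of aS (in which case α = a and w is a prefix of S), or wβ is a prefix of aS. -/
import Mathlib


variable {Γ : Type*} [DecidableEq Γ]

/-- `occ S w` is the number of occurrences of `w` as a contiguous substring of `S`,
i.e., the number of (0-based) indices `i` with `S[i..i+|w|-1] = w`. -/
def occ (S w : List Γ) : ℕ :=
  ((List.range S.length).filter fun i => (S.drop i).take w.length = w).length

lemma occ_cons (a : Γ) (S v : List Γ) :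
    occ (a :: S) v = occ S v + (if v <+: (a :: S) then 1 else 0) := by
  unfold occ
  rw [List.length_cons, List.range_succ_eq_map, List.filter_cons, List.filter_map]
  have h2 : ((fun i => decide (List.take v.length (List.drop i (a :: S)) = v)) ∘ Nat.succ)
      = fun i => decide (List.take v.length (List.drop i S) = v) := by
    funext j; simp
  have h1 : decide ((List.take v.length (List.drop 0 (a :: S))) = v)
      = decide (v <+: (a :: S)) := by
    simp [List.prefix_iff_eq_take, eq_comm]
  rw [h2, h1]
  by_cases hp : v <+: (a :: S) <;> simp [hp, Nat.add_comm]

/-- `Phi S w` is the set of pairs `(α, β)` of characters such that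
`occ S (αwβ) = occ S (αw) = occ S (wβ) = 1`. -/
def Phi (S w : List Γ) : Set (Γ × Γ) :=
  {p | occ S (p.1 :: (w ++ [p.2])) = 1 ∧ occ S (p.1 :: w) = 1 ∧ occ S (w ++ [p.2]) = 1}

/-- The net frequency of `w` in `S`. -/
noncomputable def phi (S w : List Γ) : ℕ := (Phi S w).ncard

/-- If a nonempty repeat `w` of `S` loses the pair `(α, β)` from `Phi`
when `a` is prepended to `S`, then either `αw` is a prefix of `a :: S` (in which case
`α = a` and `w` is a prefix of `S`), or `wβ` is a prefix of `a :: S`. -/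
theorem stmt15 (S : List Γ) (a : Γ) (w : List Γ) (hw : w ≠ [])
    (hrep : 2 ≤ occ S w)
    (α β : Γ) (hin : (α, β) ∈ Phi S w) (hout : (α, β) ∉ Phi (a :: S) w) :
    ((α :: w) <+: (a :: S) ∧ α = a ∧ w <+: S) ∨ (w ++ [β]) <+: (a :: S) := by
  obtain ⟨h1, h2, h3⟩ := hin
  simp only [Phi, Set.mem_setOf_eq, not_and_or] at hout
  have key : (α :: (w ++ [β])) <+: (a :: S) ∨ (α :: w) <+: (a :: S) ∨ (w ++ [β]) <+: (a :: S) := by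
    rcases hout with h | h | h
    · left
      by_contra hp
      exact h (by rw [occ_cons, if_neg hp, h1])
    · right; left
      by_contra hp
      exact h (by rw [occ_cons, if_neg hp, h2])
    · right; right
      by_contra hp
      exact h (by rw [occ_cons, if_neg hp, h3])
  have left_of : (α :: w) <+: (a :: S) →
      ((α :: w) <+: (a :: S) ∧ α = a ∧ w <+: S) ∨ (w ++ [β]) <+: (a :: S) := by
    intro hp
    rw [List.cons_prefix_cons] at hp
    exact Or.inl ⟨List.cons_prefix_cons.2 hp, hp.1, hp.2⟩
  rcases key with h | h | h
  · apply left_of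
    have : (α :: w) <+: (α :: (w ++ [β])) := by
      rw [show α :: (w ++ [β]) = (α :: w) ++ [β] from rfl]
      exact List.prefix_append _ _
    exact this.trans h
  · exact left_of h
  · exact Or.inr h
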